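/- arXiv:1704.00209 — 2 statements merged into one kernel-verified Lean document; each statement's English description precedes it below -/
import Mathlib

section
/- Let V be a quantale, A, B, M V-categories, d : A → M a V-functor, J : A ⇸ B a V-profunctor, and l : B → M a V-functor that is the left Kan extension of d along J, i.e. M̄(l y, z) = inf_{x ∈ A} (J(x,y) ⊸ M̄(d x, z)) for all y ∈ B, z ∈ M. Then the Beck–Chevalley condition, namely sup_{x ∈ A} M̄(z, d x) ⊗ J(x,y) = M̄(z, l y) for all z ∈ M and y ∈ B, holds if and only if k ≤ sup_{x ∈ A} M̄(l y, d x) ⊗ J(x,y) for every y ∈ B. -/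
/-- The internal hom of a quantale: `v ⊸ w = sup {u | v ⊗ u ≤ w}`. -/
def qhimp {V : Type*} [CompleteLattice V] [Monoid V] (v w : V) : V :=
  sSup {u | v * u ≤ w}

/-- **Proposition 2.9** of the paper: for a left Kan extension `l` of `d` along `J`
(in `V`-Prof), the Beck–Chevalley condition
`sup_x M̄(z, d x) ⊗ J(x,y) = M̄(z, l y)` (for all `z, y`) holds precisely when
`k ≤ sup_x M̄(l y, d x) ⊗ J(x,y)` for every `y`. -/
theorem beckChevalley_characterisation {V : Type*} [CompleteLattice V] [Monoid V]
    (hl : ∀ (v : V) (S : Set V), v * sSup S = ⨆ w ∈ S, v * w)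
    (hr : ∀ (v : V) (S : Set V), sSup S * v = ⨆ w ∈ S, w * v)
    {A B M : Type*}
    (Abar : A → A → V) (hA₁ : ∀ x, (1 : V) ≤ Abar x x)
    (hA₂ : ∀ x y z, Abar x y * Abar y z ≤ Abar x z)
    (Bbar : B → B → V) (hB₁ : ∀ y, (1 : V) ≤ Bbar y y)
    (hB₂ : ∀ x y z, Bbar x y * Bbar y z ≤ Bbar x z)
    (Mbar : M → M → V) (hM₁ : ∀ z, (1 : V) ≤ Mbar z z)
    (hM₂ : ∀ x y z, Mbar x y * Mbar y z ≤ Mbar x z)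
    (d : A → M) (hd : ∀ x y, Abar x y ≤ Mbar (d x) (d y))
    (J : A → B → V)
    (hJ : ∀ x₁ x₂ y₁ y₂, Abar x₁ x₂ * J x₂ y₁ * Bbar y₁ y₂ ≤ J x₁ y₂)
    (l : B → M) (hlf : ∀ y y', Bbar y y' ≤ Mbar (l y) (l y'))
    (hKan : ∀ y z, Mbar (l y) z = ⨅ x, qhimp (J x y) (Mbar (d x) z)) :
    (∀ (z : M) (y : B), (⨆ x, Mbar z (d x) * J x y) = Mbar z (l y)) ↔
      (∀ y : B, (1 : V) ≤ ⨆ x, Mbar (l y) (d x) * J x y) := by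
  -- monotonicity of multiplication in each argument
  have monol : ∀ (v : V) {w w' : V}, w ≤ w' → v * w ≤ v * w' := by
    intro v w w' h
    have h1 : sSup {w, w'} = w' := by
      rw [sSup_pair]; exact sup_eq_right.mpr h
    have h2 := hl v {w, w'}
    rw [h1] at h2
    rw [h2]
    simp only [iSup_pair]
    exact le_sup_left
  have monor : ∀ (v : V) {w w' : V}, w ≤ w' → w * v ≤ w' * v := by
    intro v w w' h
    have h1 : sSup {w, w'} = w' := by
      rw [sSup_pair]; exact sup_eq_right.mpr h
    have h2 := hr v {w, w'}
    rw [h1] at h2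
    rw [h2]
    simp only [iSup_pair]
    exact le_sup_left
  constructor
  · intro hBC y
    have := hBC (l y) y
    rw [this]
    exact hM₁ (l y)
  · intro hk z y
    apply le_antisymm
    · -- each term ≤ Mbar z (l y)
      apply iSup_le
      intro x
      -- first: J x y ≤ Mbar (d x) (l y)
      have h1 : (1 : V) ≤ qhimp (J x y) (Mbar (d x) (l y)) := by
        have := hKan y (l y)
        have h2 : (1 : V) ≤ ⨅ x, qhimp (J x y) (Mbar (d x) (l y)) := this ▸ hM₁ (l y)
        exact h2.trans (iInf_le _ x)
      have h3 : J x y * qhimp (J x y) (Mbar (d x) (l y)) ≤ Mbar (d x) (l y) := by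
        rw [qhimp, hl]
        exact iSup₂_le fun u hu => hu
      have h4 : J x y ≤ Mbar (d x) (l y) :=
        calc J x y = J x y * 1 := (mul_one _).symm
          _ ≤ J x y * qhimp (J x y) (Mbar (d x) (l y)) := monol _ h1
          _ ≤ Mbar (d x) (l y) := h3
      calc Mbar z (d x) * J x y ≤ Mbar z (d x) * Mbar (d x) (l y) := monol _ h4
        _ ≤ Mbar z (l y) := hM₂ _ _ _
    · -- Mbar z (l y) ≤ sup
      have h1 := hk y
      calc Mbar z (l y) = Mbar z (l y) * 1 := (mul_one _).symm
        _ ≤ Mbar z (l y) * ⨆ x, Mbar (l y) (d x) * J x y := monol _ h1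
        _ = Mbar z (l y) * sSup (Set.range fun x => Mbar (l y) (d x) * J x y) := by
            rw [sSup_range]
        _ = ⨆ w ∈ (Set.range fun x => Mbar (l y) (d x) * J x y), Mbar z (l y) * w := hl _ _
        _ ≤ ⨆ x, Mbar z (d x) * J x y := by
            apply iSup₂_le
            rintro w ⟨x, rfl⟩
            refine le_trans ?_ (le_iSup _ x)
            calc Mbar z (l y) * (Mbar (l y) (d x) * J x y)
                = Mbar z (l y) * Mbar (l y) (d x) * J x y := (mul_assoc _ _ _).symm
              _ ≤ Mbar z (d x) * J x y := monor _ (hM₂ _ _ _)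
end

section
/- Let V be a completely distributive quantale, (A, α) and (B, β) (U,V)-graphs, and J : A × B → V a V-relation. Put δ(S,x) = sup{ α(𝔵,x) | 𝔵 ∈ UA with S ∈ 𝔵 } and ζ(T,y) = sup{ β(𝔶,y) | 𝔶 ∈ UB with T ∈ 𝔶 }. Call J U-open if sup_{x ∈ A} α(𝔵,x) ⊗ J(x,y) ≤ sup_{𝔶 ∈ UB} (UJ)(𝔵,𝔶) ⊗ β(𝔶,y) for all 𝔵 ∈ UA, y ∈ B, and P-open if δ(S,x) ⊗ J(x,y) ≤ sup_{T ⊆ B} (PJ)(S,T) ⊗ ζ(T,y) for all S ⊆ A, x ∈ A, y ∈ B. Then: (a) if J is U-open then J is P-open; (b) conversely, if (B, β) is unitary, U(UJ ∘ β) = (U²J) ∘ (Uβ) as V-relations from U(UA) to UB (where U of a V-relation is given by the ultrafilter extension formula and ∘ is composition of V-relations), and J is P-open, then J is U-open. -/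
/-- The Barr extension of a `V`-relation `K : X ⇸ Y` to ultrafilters:
`(UK)(𝔛,𝔜) = inf_{σ ∈ 𝔛, τ ∈ 𝔜} sup_{x ∈ σ, y ∈ τ} K(x,y)`. -/
def Urel {V : Type*} [CompleteLattice V] {X Y : Type*} (K : X → Y → V)
    (𝔛 : Ultrafilter X) (𝔜 : Ultrafilter Y) : V :=
  ⨅ σ : Set X, ⨅ _ : σ ∈ 𝔛, ⨅ τ : Set Y, ⨅ _ : τ ∈ 𝔜, ⨆ x ∈ σ, ⨆ y ∈ τ, K x y

/-- The powerset extension of a `V`-relation: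
`(PK)(S,T) = inf_{t ∈ T} sup_{s ∈ S} K(s,t)`. -/
def Prel {V : Type*} [CompleteLattice V] {X Y : Type*} (K : X → Y → V)
    (S : Set X) (T : Set Y) : V :=
  ⨅ t ∈ T, ⨆ s ∈ S, K s t

/-- The closure relation induced by a convergence relation:
`δ(S,x) = sup { α(𝔵,x) | S ∈ 𝔵 }`. -/
def epsComp {V : Type*} [CompleteLattice V] {X : Type*}
    (α : Ultrafilter X → X → V) (S : Set X) (x : X) : V :=
  ⨆ 𝔵 : Ultrafilter X, ⨆ _ : S ∈ 𝔵, α 𝔵 x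


universe u
variable {V : Type u}

/-- `v` is totally below `u`. -/
def TotB [CompleteLattice V] (v u : V) : Prop :=
  ∀ s : Set V, u ≤ sSup s → ∃ w ∈ s, v ≤ w

lemma TotB.le [CompleteLattice V] {v u : V} (h : TotB v u) : v ≤ u := by
  obtain ⟨w, hw, hvw⟩ := h {u} (by simp)
  rw [Set.mem_singleton_iff] at hw
  exact hw ▸ hvw

lemma le_sSup_totB [CompletelyDistribLattice V] (u : V) : u ≤ sSup {v | TotB v u} := by
  have h1 : u ≤ ⨅ s : {s : Set V // u ≤ sSup s}, ⨆ w : s.1, (w : V) := by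
    refine le_iInf fun s => ?_
    rw [← sSup_eq_iSup']
    exact s.2
  rw [iInf_iSup_eq] at h1
  refine h1.trans (iSup_le fun g => le_sSup ?_)
  intro s hs
  exact ⟨(g ⟨s, hs⟩ : V), (g ⟨s, hs⟩).2, iInf_le _ _⟩

lemma eq_iSup_totB [CompletelyDistribLattice V] (u : V) :
    u = ⨆ v : V, ⨆ _ : TotB v u, v := by
  apply le_antisymm
  · exact (le_sSup_totB u).trans (sSup_le fun v hv => le_iSup₂ (f := fun v _ => v) v hv)
  · exact iSup₂_le fun v hv => hv.le

section mul
variable [CompleteLattice V] [Monoid V]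

lemma mul_le_left (hl : ∀ (v : V) (S : Set V), v * sSup S = ⨆ w ∈ S, v * w)
    {a b : V} (c : V) (h : a ≤ b) : c * a ≤ c * b := by
  have h2 := hl c {a, b}
  rw [sSup_pair, sup_eq_right.2 h] at h2
  rw [h2]
  exact le_iSup₂_of_le a (by simp) le_rfl

lemma mul_le_right (hr : ∀ (v : V) (S : Set V), sSup S * v = ⨆ w ∈ S, w * v)
    {a b : V} (c : V) (h : a ≤ b) : a * c ≤ b * c := by
  have h2 := hr c {a, b}
  rw [sSup_pair, sup_eq_right.2 h] at h2
  rw [h2]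
  exact le_iSup₂_of_le a (by simp) le_rfl

lemma iSup2_mul (hr : ∀ (v : V) (S : Set V), sSup S * v = ⨆ w ∈ S, w * v)
    {ι : Sort*} (P : ι → Prop) (f : ι → V) (c : V) :
    (⨆ i, ⨆ _ : P i, f i) * c = ⨆ i, ⨆ _ : P i, f i * c := by
  have e1 : (⨆ i, ⨆ _ : P i, f i) = sSup {w | ∃ i, P i ∧ w = f i} := by
    apply le_antisymm
    · exact iSup₂_le fun i hi => le_sSup ⟨i, hi, rfl⟩
    · refine sSup_le ?_
      rintro w ⟨i, hi, rfl⟩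
      exact le_iSup₂ (f := fun i _ => f i) i hi
  rw [e1, hr]
  apply le_antisymm
  · refine iSup₂_le ?_
    rintro w ⟨i, hi, rfl⟩
    exact le_iSup₂ (f := fun i _ => f i * c) i hi
  · exact iSup₂_le fun i hi => le_iSup₂_of_le (f i) ⟨i, hi, rfl⟩ le_rfl

lemma mul_iSup2 (hl : ∀ (v : V) (S : Set V), v * sSup S = ⨆ w ∈ S, v * w)
    {ι : Sort*} (P : ι → Prop) (f : ι → V) (c : V) :
    c * (⨆ i, ⨆ _ : P i, f i) = ⨆ i, ⨆ _ : P i, c * f i := by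
  have e1 : (⨆ i, ⨆ _ : P i, f i) = sSup {w | ∃ i, P i ∧ w = f i} := by
    apply le_antisymm
    · exact iSup₂_le fun i hi => le_sSup ⟨i, hi, rfl⟩
    · refine sSup_le ?_
      rintro w ⟨i, hi, rfl⟩
      exact le_iSup₂ (f := fun i _ => f i) i hi
  rw [e1, hl]
  apply le_antisymm
  · refine iSup₂_le ?_
    rintro w ⟨i, hi, rfl⟩
    exact le_iSup₂ (f := fun i _ => c * f i) i hi
  · exact iSup₂_le fun i hi => le_iSup₂_of_le (f i) ⟨i, hi, rfl⟩ le_rfl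
end mul

section urel
variable [CompleteLattice V] {X Y : Type*} {K : X → Y → V} {𝔛 : Ultrafilter X} {𝔜 : Ultrafilter Y}

lemma Urel_le {σ : Set X} {τ : Set Y} (hσ : σ ∈ 𝔛) (hτ : τ ∈ 𝔜) :
    Urel K 𝔛 𝔜 ≤ ⨆ x ∈ σ, ⨆ y ∈ τ, K x y :=
  iInf_le_of_le σ (iInf_le_of_le hσ (iInf_le_of_le τ (iInf_le _ hτ)))

lemma le_Urel {v : V} (h : ∀ σ ∈ 𝔛, ∀ τ ∈ 𝔜, v ≤ ⨆ x ∈ σ, ⨆ y ∈ τ, K x y) :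
    v ≤ Urel K 𝔛 𝔜 :=
  le_iInf fun σ => le_iInf fun hσ => le_iInf fun τ => le_iInf fun hτ => h σ hσ τ hτ
end urel

lemma mem_bind_id' {A : Type*} (𝔛 : Ultrafilter (Ultrafilter A)) (S : Set A) :
    S ∈ 𝔛.bind id ↔ {𝔵 : Ultrafilter A | S ∈ 𝔵} ∈ 𝔛 :=
  Filter.mem_bind'

section partA
variable [CompletelyDistribLattice V] [Monoid V]
  {A B : Type*}

lemma partA (hl : ∀ (v : V) (S : Set V), v * sSup S = ⨆ w ∈ S, v * w)
    (hr : ∀ (v : V) (S : Set V), sSup S * v = ⨆ w ∈ S, w * v)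
    (α : Ultrafilter A → A → V) (β : Ultrafilter B → B → V) (J : A → B → V)
    (hU : ∀ (𝔵 : Ultrafilter A) (y : B),
        (⨆ x, α 𝔵 x * J x y) ≤ ⨆ 𝔶 : Ultrafilter B, Urel J 𝔵 𝔶 * β 𝔶 y)
    (S : Set A) (x : A) (y : B) :
    epsComp α S x * J x y ≤ ⨆ T : Set B, Prel J S T * epsComp β T y := by
  have e : epsComp α S x * J x y = ⨆ 𝔵 : Ultrafilter A, ⨆ _ : S ∈ 𝔵, α 𝔵 x * J x y :=
    iSup2_mul hr _ _ _
  rw [e]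
  refine iSup₂_le fun 𝔵 hS => ?_
  have h1 : α 𝔵 x * J x y ≤ ⨆ 𝔶 : Ultrafilter B, Urel J 𝔵 𝔶 * β 𝔶 y :=
    (le_iSup (fun x' => α 𝔵 x' * J x' y) x).trans (hU 𝔵 y)
  refine h1.trans (iSup_le fun 𝔶 => ?_)
  conv_lhs => rw [eq_iSup_totB (Urel J 𝔵 𝔶)]
  rw [iSup2_mul hr]
  refine iSup₂_le fun v hv => ?_
  have hTy : {t : B | v ≤ ⨆ s ∈ S, J s t} ∈ 𝔶 := by
    by_contra hc
    have hTc : {t : B | v ≤ ⨆ s ∈ S, J s t}ᶜ ∈ 𝔶 := Ultrafilter.compl_mem_iff_notMem.2 hc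
    have hle : Urel J 𝔵 𝔶 ≤
        sSup {w | ∃ s ∈ S, ∃ t ∈ {t : B | v ≤ ⨆ s ∈ S, J s t}ᶜ, w = J s t} :=
      (Urel_le hS hTc).trans
        (iSup₂_le fun s hs => iSup₂_le fun t ht => le_sSup ⟨s, hs, t, ht, rfl⟩)
    obtain ⟨w, ⟨s, hs, t, ht, rfl⟩, hvw⟩ := hv _ hle
    exact ht (hvw.trans (le_iSup₂ (f := fun s _ => J s t) s hs))
  refine le_iSup_of_le {t : B | v ≤ ⨆ s ∈ S, J s t} ?_
  have h2 : v ≤ Prel J S {t : B | v ≤ ⨆ s ∈ S, J s t} := le_iInf₂ fun t ht => ht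
  have h3 : β 𝔶 y ≤ epsComp β {t : B | v ≤ ⨆ s ∈ S, J s t} y :=
    le_iSup₂ (f := fun 𝔶' (_ : _ ∈ 𝔶') => β 𝔶' y) 𝔶 hTy
  exact (mul_le_right hr _ h2).trans (mul_le_left hl _ h3)
end partA

section partB
variable [CompletelyDistribLattice V] [Monoid V] {A B : Type*}

lemma partB_step1 (hl : ∀ (v : V) (S : Set V), v * sSup S = ⨆ w ∈ S, v * w)
    (hr : ∀ (v : V) (S : Set V), sSup S * v = ⨆ w ∈ S, w * v)
    (α : Ultrafilter A → A → V) (β : Ultrafilter B → B → V) (J : A → B → V)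
    (hP : ∀ (S : Set A) (x : A) (y : B),
        epsComp α S x * J x y ≤ ⨆ T : Set B, Prel J S T * epsComp β T y)
    (𝔵 : Ultrafilter A) (x : A) (y : B) (S : Set A) (hS : S ∈ 𝔵) :
    α 𝔵 x * J x y ≤ ⨆ 𝔵' : Ultrafilter A, ⨆ _ : S ∈ 𝔵',
      ⨆ 𝔶 : Ultrafilter B, Urel J 𝔵' 𝔶 * β 𝔶 y := by
  classical
  have h0 : α 𝔵 x ≤ epsComp α S x :=
    le_iSup₂ (f := fun 𝔵' (_ : S ∈ 𝔵') => α 𝔵' x) 𝔵 hS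
  refine (mul_le_right hr _ h0).trans ((hP S x y).trans (iSup_le fun T => ?_))
  have e : Prel J S T * epsComp β T y
      = ⨆ 𝔶 : Ultrafilter B, ⨆ _ : T ∈ 𝔶, Prel J S T * β 𝔶 y :=
    mul_iSup2 hl _ _ _
  rw [e]
  refine iSup₂_le fun 𝔶 hT => ?_
  conv_lhs => rw [eq_iSup_totB (Prel J S T)]
  rw [iSup2_mul hr]
  refine iSup₂_le fun w hw => ?_
  have hex : ∀ t ∈ T, ∃ s, s ∈ S ∧ w ≤ J s t := by
    intro t ht
    have h1 : Prel J S T ≤ sSup {z | ∃ s, s ∈ S ∧ z = J s t} :=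
      (iInf₂_le t ht).trans (iSup₂_le fun s hs => le_sSup ⟨s, hs, rfl⟩)
    obtain ⟨z, ⟨s, hs, rfl⟩, hz⟩ := hw _ h1
    exact ⟨s, hs, hz⟩
  obtain ⟨t₀, ht₀⟩ := Ultrafilter.nonempty_of_mem hT
  obtain ⟨s₀, hs₀, -⟩ := hex t₀ ht₀
  set f : B → A := fun t => if h : ∃ s, s ∈ S ∧ w ≤ J s t then h.choose else s₀ with hf
  have hfS : ∀ t, f t ∈ S := by
    intro t
    by_cases h : ∃ s, s ∈ S ∧ w ≤ J s t
    · simp only [hf, dif_pos h]; exact h.choose_spec.1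
    · simp only [hf, dif_neg h]; exact hs₀
  have hfJ : ∀ t ∈ T, w ≤ J (f t) t := by
    intro t ht
    have h := hex t ht
    simp only [hf, dif_pos h]
    exact h.choose_spec.2
  have hS' : S ∈ 𝔶.map f := by
    rw [Ultrafilter.mem_map]
    exact Ultrafilter.mem_coe.1 (Filter.univ_mem' hfS)
  have hUr : w ≤ Urel J (𝔶.map f) 𝔶 := by
    refine le_Urel fun σ hσ τ hτ => ?_
    have hσ' : f ⁻¹' σ ∈ 𝔶 := Ultrafilter.mem_map.1 hσ
    have hm : f ⁻¹' σ ∩ τ ∩ T ∈ 𝔶 := Ultrafilter.mem_coe.1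
      (Filter.inter_mem (Filter.inter_mem (Ultrafilter.mem_coe.2 hσ')
        (Ultrafilter.mem_coe.2 hτ)) (Ultrafilter.mem_coe.2 hT))
    obtain ⟨t, ⟨htσ, htτ⟩, htT⟩ := Ultrafilter.nonempty_of_mem hm
    exact (hfJ t htT).trans
      (le_iSup₂_of_le (f t) htσ (le_iSup₂ (f := fun t' (_ : t' ∈ τ) => J (f t) t') t htτ))
  exact le_iSup₂_of_le (𝔶.map f) hS'
    (le_iSup_of_le 𝔶 (mul_le_right hr _ hUr))
end partB

section partBmain
variable [CompletelyDistribLattice V] [Monoid V] {A B : Type*}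

lemma partB (hl : ∀ (v : V) (S : Set V), v * sSup S = ⨆ w ∈ S, v * w)
    (hr : ∀ (v : V) (S : Set V), sSup S * v = ⨆ w ∈ S, w * v)
    (α : Ultrafilter A → A → V) (β : Ultrafilter B → B → V) (J : A → B → V)
    (hUnit : ∀ (𝔜 : Ultrafilter (Ultrafilter B)) (y : B),
        (⨅ σ : Set (Ultrafilter B), ⨅ _ : σ ∈ 𝔜, ⨆ 𝔶 ∈ σ, β 𝔶 y) ≤ β (𝔜.bind id) y)
    (hEq : ∀ (𝔛 : Ultrafilter (Ultrafilter A)) (𝔶 : Ultrafilter B),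
        Urel (fun 𝔵 y => ⨆ 𝔶' : Ultrafilter B, Urel J 𝔵 𝔶' * β 𝔶' y) 𝔛 𝔶 =
          ⨆ 𝔜 : Ultrafilter (Ultrafilter B), Urel (Urel J) 𝔛 𝔜 * Urel β 𝔜 𝔶)
    (hP : ∀ (S : Set A) (x : A) (y : B),
        epsComp α S x * J x y ≤ ⨆ T : Set B, Prel J S T * epsComp β T y)
    (𝔵 : Ultrafilter A) (y : B) :
    (⨆ x, α 𝔵 x * J x y) ≤ ⨆ 𝔶 : Ultrafilter B, Urel J 𝔵 𝔶 * β 𝔶 y := by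
  classical
  refine iSup_le fun x => ?_
  set K : Ultrafilter A → B → V :=
    fun 𝔵' y' => ⨆ 𝔶 : Ultrafilter B, Urel J 𝔵' 𝔶 * β 𝔶 y' with hK
  refine (le_sSup_totB (α 𝔵 x * J x y)).trans (sSup_le fun v hv => ?_)
  -- For each S ∈ 𝔵, pick a witness ultrafilter containing S
  have hstep : ∀ S : Set A, S ∈ 𝔵 → ∃ 𝔵' : Ultrafilter A, S ∈ 𝔵' ∧ v ≤ K 𝔵' y := by
    intro S hS
    have h1 := partB_step1 hl hr α β J hP 𝔵 x y S hS
    obtain ⟨w, ⟨𝔵', hS', rfl⟩, hvw⟩ :=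
      hv {w | ∃ 𝔵' : Ultrafilter A, S ∈ 𝔵' ∧ w = K 𝔵' y}
        (h1.trans (iSup₂_le fun 𝔵' h => le_sSup ⟨𝔵', h, rfl⟩))
    exact ⟨𝔵', hS', hvw⟩
  choose c hc1 hc2 using hstep
  -- build a filter on Ultrafilter A from the images of c on small sets
  set Bs : {S : Set A // S ∈ 𝔵} → Set (Ultrafilter A) :=
    fun S => {𝔵' | ∃ S' : Set A, ∃ h : S' ∈ 𝔵, S' ⊆ S.1 ∧ 𝔵' = c S' h} with hBs
  have hBsne : ∀ S, (Bs S).Nonempty := fun S => ⟨c S.1 S.2, S.1, S.2, le_rfl, rfl⟩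
  have hdir : Directed (· ≥ ·) (fun S => Filter.principal (Bs S)) := by
    intro S₁ S₂
    refine ⟨⟨S₁.1 ∩ S₂.1, Ultrafilter.mem_coe.1 (Filter.inter_mem
      (Ultrafilter.mem_coe.2 S₁.2) (Ultrafilter.mem_coe.2 S₂.2))⟩, ?_, ?_⟩ <;>
    · refine Filter.principal_mono.2 ?_
      rintro 𝔵' ⟨S', h, hsub, rfl⟩
      exact ⟨S', h, hsub.trans (by simp), rfl⟩
  have : Nonempty {S : Set A // S ∈ 𝔵} := ⟨⟨Set.univ, Ultrafilter.mem_coe.1 Filter.univ_mem⟩⟩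
  have hne : Filter.NeBot (⨅ S, Filter.principal (Bs S)) :=
    Filter.iInf_neBot_of_directed' hdir fun S => Filter.principal_neBot_iff.2 (hBsne S)
  obtain ⟨𝔛, h𝔛⟩ := Filter.exists_ultrafilter_le (⨅ S, Filter.principal (Bs S))
  have hBsmem : ∀ S, Bs S ∈ 𝔛 := fun S =>
    h𝔛 (Filter.mem_iInf_of_mem S (Filter.mem_principal_self _))
  have hW : {𝔵' : Ultrafilter A | v ≤ K 𝔵' y} ∈ 𝔛 := by
    refine Filter.mem_of_superset (hBsmem ⟨Set.univ, Ultrafilter.mem_coe.1 Filter.univ_mem⟩) ?_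
    rintro 𝔵' ⟨S', h, -, rfl⟩
    exact hc2 S' h
  have hmu : 𝔛.bind id = 𝔵 := by
    refine Ultrafilter.eq_of_le ?_
    intro S hS
    rw [Ultrafilter.mem_coe, mem_bind_id']
    refine Filter.mem_of_superset (hBsmem ⟨S, hS⟩) ?_
    rintro 𝔵' ⟨S', h, hsub, rfl⟩
    exact Ultrafilter.mem_coe.1 (Filter.mem_of_superset (Ultrafilter.mem_coe.2 (hc1 S' h)) hsub)
  have hv2 : v ≤ Urel K 𝔛 (pure y) := by
    refine le_Urel fun σ hσ τ hτ => ?_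
    have hyτ : y ∈ τ := Ultrafilter.mem_pure.1 hτ
    have hm : σ ∩ {𝔵' : Ultrafilter A | v ≤ K 𝔵' y} ∈ 𝔛 := Ultrafilter.mem_coe.1
      (Filter.inter_mem (Ultrafilter.mem_coe.2 hσ) (Ultrafilter.mem_coe.2 hW))
    obtain ⟨𝔵', hσ', hv'⟩ := Ultrafilter.nonempty_of_mem hm
    exact hv'.trans (le_iSup₂_of_le 𝔵' hσ'
      (le_iSup₂ (f := fun y' (_ : y' ∈ τ) => K 𝔵' y') y hyτ))
  rw [hEq 𝔛 (pure y)] at hv2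
  refine hv2.trans (iSup_le fun 𝔜 => ?_)
  have hA : Urel (Urel J) 𝔛 𝔜 ≤ Urel J 𝔵 (𝔜.bind id) := by
    refine le_Urel fun S hS T hT => ?_
    have hS' : {𝔵' : Ultrafilter A | S ∈ 𝔵'} ∈ 𝔛 := (mem_bind_id' 𝔛 S).1 (hmu ▸ hS)
    have hT' : {𝔶' : Ultrafilter B | T ∈ 𝔶'} ∈ 𝔜 := (mem_bind_id' 𝔜 T).1 hT
    refine (Urel_le hS' hT').trans ?_
    exact iSup₂_le fun 𝔵' h𝔵' => iSup₂_le fun 𝔶' h𝔶' => Urel_le h𝔵' h𝔶'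
  have hB : Urel β 𝔜 (pure y) ≤ β (𝔜.bind id) y := by
    refine le_trans ?_ (hUnit 𝔜 y)
    refine le_iInf fun σ => le_iInf fun hσ => ?_
    refine (Urel_le (τ := {y}) hσ (Ultrafilter.mem_pure.2 rfl)).trans ?_
    refine iSup₂_le fun 𝔶 h => iSup₂_le fun y' hy' => ?_
    rw [Set.mem_singleton_iff] at hy'
    rw [hy']
    exact le_iSup₂ (f := fun 𝔶' (_ : 𝔶' ∈ σ) => β 𝔶' y) 𝔶 h
  exact ((mul_le_right hr _ hA).trans (mul_le_left hl _ hB)).trans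
    (le_iSup (fun 𝔶 => Urel J 𝔵 𝔶 * β 𝔶 y) (𝔜.bind id))
end partBmain


/-- **Theorem 6.6(a)** of the paper and its converse: for `(U,V)`-graphs
`(A,α)`, `(B,β)` and a `V`-relation `J : A ⇸ B`, if `J` is `U`-open then `J` is
`P`-open with respect to the induced closure relations; conversely if `(B,β)`
is unitary, `U(UJ ∘ β) = U²J ∘ Uβ` and `J` is `P`-open then `J` is `U`-open. -/
theorem Uopen_iff_Popen {V : Type*} [CompletelyDistribLattice V] [Monoid V]
    (hl : ∀ (v : V) (S : Set V), v * sSup S = ⨆ w ∈ S, v * w)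
    (hr : ∀ (v : V) (S : Set V), sSup S * v = ⨆ w ∈ S, w * v)
    {A B : Type*}
    (α : Ultrafilter A → A → V) (hα : ∀ x : A, (1 : V) ≤ α (pure x) x)
    (β : Ultrafilter B → B → V) (hβ : ∀ y : B, (1 : V) ≤ β (pure y) y)
    (J : A → B → V) :
    ((∀ (𝔵 : Ultrafilter A) (y : B),
        (⨆ x, α 𝔵 x * J x y) ≤ ⨆ 𝔶 : Ultrafilter B, Urel J 𝔵 𝔶 * β 𝔶 y) →
      ∀ (S : Set A) (x : A) (y : B),
        epsComp α S x * J x y ≤ ⨆ T : Set B, Prel J S T * epsComp β T y) ∧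
    ((∀ (𝔜 : Ultrafilter (Ultrafilter B)) (y : B),
        (⨅ σ : Set (Ultrafilter B), ⨅ _ : σ ∈ 𝔜, ⨆ 𝔶 ∈ σ, β 𝔶 y) ≤
          β (𝔜.bind id) y) →
      (∀ (𝔛 : Ultrafilter (Ultrafilter A)) (𝔶 : Ultrafilter B),
        Urel (fun 𝔵 y => ⨆ 𝔶' : Ultrafilter B, Urel J 𝔵 𝔶' * β 𝔶' y) 𝔛 𝔶 =
          ⨆ 𝔜 : Ultrafilter (Ultrafilter B), Urel (Urel J) 𝔛 𝔜 * Urel β 𝔜 𝔶) →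
      (∀ (S : Set A) (x : A) (y : B),
        epsComp α S x * J x y ≤ ⨆ T : Set B, Prel J S T * epsComp β T y) →
      ∀ (𝔵 : Ultrafilter A) (y : B),
        (⨆ x, α 𝔵 x * J x y) ≤ ⨆ 𝔶 : Ultrafilter B, Urel J 𝔵 𝔶 * β 𝔶 y) := by
  exact ⟨partA hl hr α β J,
    fun hUnit hEq hP => partB hl hr α β J hUnit hEq hP⟩
end
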